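/- arXiv:math/0703532 — 4 statements merged into one kernel-verified Lean document; each statement's English description precedes it below -/
import Mathlib

section
/- Let Γ be a finite group and consider a walk setup on Γ (symmetric primitive adjacency matrix A : Fin n → Fin n → ℕ with vertex labels t : Fin n → Γ) such that the set {t i : i : Fin n} generates Γ, and such that for every group homomorphism χ : Γ →* ℂˣ with χ not identically 1 there exist indices i, j with χ (t i) ≠ χ (t j). Let k ≥ 1 and let ρ : Γ →* Matrix.unitaryGroup (Fin k) ℂ be a unitary representation that is irreducible (the only ℂ-subspaces W of Fin k → ℂ with (ρ γ).mulVec v ∈ W for all γ ∈ Γ and v ∈ W are W = ⊥ and W = ⊤) and nontrivial (ρ γ ≠ 1 for some γ). Define the complex matrix B indexed by (Fin n) × (Fin k) by B ((i,a),(j,b)) = ((ρ (t i)) a b) · (A i j : ℂ). Then the spectral radius of B is strictly less than the spectral radius of the complex matrix (i,j) ↦ (A i j : ℂ). -/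
/-!
Let `r` be the Perron eigenvalue of `A` with positive eigenvector `w`, and let `B v = μ v`,
`v ≠ 0`, with blocks `v_j ∈ ℂᵏ`. Since `ρ (t i)` is unitary,
`‖μ‖ ‖v_i‖ = ‖∑_j A_ij v_j‖ ≤ ∑_j A_ij ‖v_j‖`; pairing with `w` (using the symmetry of `A`) shows
that `r ≤ ‖μ‖` forces `A u = r u` for `u_j = ‖v_j‖` and equality in every triangle inequality.
Strict convexity then makes blocks with a common neighbour parallel, and primitivity spreads this
to one vector `e` with `v_j = u_j e`, so that `ρ (t i) e = (μ / r) e` for every `i`. As the `t i`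
generate `Γ`, the line `ℂ e` is `Γ`-stable, hence everything by irreducibility; so `Γ` acts through
a character, nontrivial but constant on the `t i`, which is excluded. Hence every eigenvalue of `B`
has modulus `< r`, while `r` lies in the spectrum of `A`.
-/

open Matrix
open scoped NNReal

theorem spectrum.spectralRadius_lt_of_forall_lt_of_finite {𝕜 R : Type*} [NormedField 𝕜] [Ring R]
    [Algebra 𝕜 R] {a : R} (hfin : (spectrum 𝕜 a).Finite) {r : ℝ≥0} (hr : 0 < r)
    (h : ∀ μ ∈ spectrum 𝕜 a, ‖μ‖₊ < r) : spectralRadius 𝕜 a < r :=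
  iSup_lt_iff.2 ⟨(hfin.toFinset.sup (‖·‖₊) : ℝ≥0),
    ENNReal.coe_lt_coe.2 ((Finset.sup_lt_iff hr).2 fun μ hμ => h μ (hfin.mem_toFinset.1 hμ)),
    fun _ => iSup_le fun hμ =>
      ENNReal.coe_le_coe.2 (Finset.le_sup (f := (‖·‖₊)) (hfin.mem_toFinset.2 hμ))⟩

theorem Matrix.mem_spectrum_iff_exists_mulVec_eq_smul {n K : Type*} [Fintype n] [DecidableEq n]
    [Field K] {M : Matrix n n K} {μ : K} : μ ∈ spectrum K M ↔ ∃ v ≠ 0, M *ᵥ v = μ • v := by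
  rw [← spectrum_toLin', ← Module.End.hasEigenvalue_iff_mem_spectrum,
    Module.End.hasEigenvalue_iff, Submodule.ne_bot_iff]
  simp [and_comm]

theorem Matrix.mem_spectrum_map_of_mulVec_eq_smul {n K L : Type*} [Fintype n] [DecidableEq n]
    [Field K] [Field L] (f : K →+* L) {M : Matrix n n K} {v : n → K} {μ : K} (hv : v ≠ 0)
    (h : M *ᵥ v = μ • v) : f μ ∈ spectrum L (M.map f) :=
  mem_spectrum_iff_exists_mulVec_eq_smul.2 ⟨f ∘ v,
    fun h0 => hv (funext fun i => f.injective (by simpa using congrFun h0 i)),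
    funext fun i => by simp [← f.map_mulVec, h]⟩

theorem sameRay_sum_of_norm_sum_eq_sum_norm {ι E : Type*} [NormedAddCommGroup E]
    [NormedSpace ℝ E] [StrictConvexSpace ℝ E] {s : Finset ι} {f : ι → E}
    (h : ‖∑ j ∈ s, f j‖ = ∑ j ∈ s, ‖f j‖) {i : ι} (hi : i ∈ s) :
    SameRay ℝ (f i) (∑ j ∈ s, f j) := by
  classical
  have hsplit := Finset.add_sum_erase s f hi
  have hrest : SameRay ℝ (f i) (∑ j ∈ s.erase i, f j) := by
    refine sameRay_iff_norm_add.2 (le_antisymm (norm_add_le _ _) ?_)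
    rw [hsplit, h, ← Finset.add_sum_erase s (‖f ·‖) hi]
    gcongr
    exact norm_sum_le _ _
  simpa [hsplit] using SameRay.rfl.add_right hrest

namespace Matrix

theorem exists_pos_of_mul_apply_pos {l m o : Type*} [Fintype m] {M : Matrix l m ℝ}
    {N : Matrix m o ℝ} (hM : ∀ i j, 0 ≤ M i j) (hN : ∀ i j, 0 ≤ N i j) {i : l} {j : o}
    (h : 0 < (M * N) i j) : ∃ k, 0 < M i k ∧ 0 < N k j := by
  obtain ⟨k, -, hk⟩ := (Finset.sum_pos_iff_of_nonneg fun k _ => mul_nonneg (hM i k) (hN k j)).1 h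
  exact ⟨k, (hM i k).lt_of_ne' (left_ne_zero_of_mul hk.ne'),
    (hN k j).lt_of_ne' (right_ne_zero_of_mul hk.ne')⟩

variable {ι : Type*} [Fintype ι] {A : Matrix ι ι ℝ}

theorem dotProduct_mulVec_le_abs (hA : ∀ i j, 0 ≤ A i j) (x : ι → ℝ) :
    x ⬝ᵥ A *ᵥ x ≤ |x| ⬝ᵥ A *ᵥ |x| := by
  simp only [dotProduct, mulVec, Finset.mul_sum]
  refine Finset.sum_le_sum fun i _ => Finset.sum_le_sum fun j _ => ?_
  calc x i * (A i j * x j) ≤ |x i * (A i j * x j)| := le_abs_self _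
    _ = |x| i * (A i j * |x| j) := by simp [abs_mul, abs_of_nonneg (hA i j)]

theorem IsSymm.mulVec_eq_smul_of_smul_le_mulVec (hAs : A.IsSymm) {w u : ι → ℝ} {r : ℝ}
    (hw : ∀ i, 0 < w i) (hAw : A *ᵥ w = r • w) (h : r • u ≤ A *ᵥ u) : A *ᵥ u = r • u := by
  have hpair : w ⬝ᵥ (A *ᵥ u - r • u) = 0 := by
    rw [dotProduct_sub, dotProduct_mulVec, ← mulVec_transpose, hAs.eq, hAw, dotProduct_smul,
      smul_dotProduct, dotProduct_comm, sub_self]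
  have hterm := (Finset.sum_eq_zero_iff_of_nonneg fun i _ =>
    mul_nonneg (hw i).le (sub_nonneg.2 (h i))).1 hpair
  funext i
  exact sub_eq_zero.1 ((mul_eq_zero.1 (hterm i (Finset.mem_univ i))).resolve_left (hw i).ne')

variable [DecidableEq ι]

theorem reApplyInnerSelf_toEuclideanCLM (A : Matrix ι ι ℝ) (x : ι → ℝ) :
    (toEuclideanCLM (𝕜 := ℝ) A).reApplyInnerSelf (WithLp.toLp 2 x) = x ⬝ᵥ A *ᵥ x := by
  rw [ContinuousLinearMap.reApplyInnerSelf, toEuclideanCLM_toLp,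
    EuclideanSpace.inner_eq_star_dotProduct]
  simp

theorem IsSymm.exists_nonneg_mulVec_eq_smul [Nonempty ι] (hAs : A.IsSymm)
    (hA : ∀ i j, 0 ≤ A i j) : ∃ (r : ℝ) (w : ι → ℝ), 0 ≤ w ∧ w ≠ 0 ∧ A *ᵥ w = r • w := by
  set T := toEuclideanCLM (𝕜 := ℝ) A
  have hT : IsSelfAdjoint T := (isHermitian_iff_isSymm.2 hAs).isSelfAdjoint.map _
  obtain ⟨⟨x⟩, hx, hmax⟩ := (isCompact_sphere (0 : EuclideanSpace ℝ ι) 1).exists_isMaxOn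
    (NormedSpace.sphere_nonempty.2 zero_le_one) T.reApplyInnerSelf_continuous.continuousOn
  -- `|x|` is again a maximiser of the Rayleigh quotient, hence an eigenvector.
  set y : EuclideanSpace ℝ ι := WithLp.toLp 2 |x|
  have hy : ‖y‖ = 1 := by
    rw [← mem_sphere_zero_iff_norm.1 hx, EuclideanSpace.norm_eq, EuclideanSpace.norm_eq]
    simp [y]
  have hy0 : y ≠ 0 := norm_ne_zero_iff.1 (by simp [hy])
  have hymax : IsMaxOn T.reApplyInnerSelf (Metric.sphere 0 ‖y‖) y := by
    intro z hz
    rw [hy] at hz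
    refine (isMaxOn_iff.1 hmax z hz).trans ?_
    simpa [T, reApplyInnerSelf_toEuclideanCLM, y] using dotProduct_mulVec_le_abs hA x
  have hev := (hT.hasEigenvector_of_isMaxOn hy0 hymax).apply_eq_smul
  refine ⟨⨆ z : {z : EuclideanSpace ℝ ι // z ≠ 0}, T.rayleighQuotient z, |x|, abs_nonneg _,
    fun h => hy0 (by simp [y, h]), ?_⟩
  simpa [T, y, toEuclideanCLM_toLp] using congrArg WithLp.ofLp hev

theorem pow_mulVec_eq_smul {u : ι → ℝ} {c : ℝ} (h : A *ᵥ u = c • u) (m : ℕ) :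
    (A ^ m) *ᵥ u = c ^ m • u := by
  induction m with
  | zero => simp
  | succ m ih => rw [pow_succ, ← mulVec_mulVec, h, mulVec_smul, ih, smul_smul, pow_succ']

theorem IsPrimitive.pos_of_mulVec_eq_smul (hA : A.IsPrimitive) {u : ι → ℝ} {c : ℝ}
    (hu0 : 0 ≤ u) (hu : u ≠ 0) (h : A *ᵥ u = c • u) : 0 < c ∧ ∀ i, 0 < u i := by
  obtain ⟨m, hm, hpos⟩ := hA.exists_pos_pow
  obtain ⟨j, hj⟩ : ∃ j, 0 < u j := by
    by_contra! h'
    exact hu (le_antisymm h' hu0)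
  have hcm : ∀ i, 0 < c ^ m * u i := fun i => by
    rw [← smul_eq_mul, ← Pi.smul_apply, ← pow_mulVec_eq_smul h]
    exact Finset.sum_pos' (fun l _ => mul_nonneg (pow_apply_nonneg hA.nonneg m i l) (hu0 l))
      ⟨j, Finset.mem_univ _, mul_pos (hpos i j) hj⟩
  have hc0 : 0 ≤ c := by
    have : 0 ≤ c * u j := by
      rw [← smul_eq_mul, ← Pi.smul_apply, ← h]
      exact Finset.sum_nonneg fun l _ => mul_nonneg (hA.nonneg j l) (hu0 l)
    exact nonneg_of_mul_nonneg_left this hj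
  have hc : c ≠ 0 := by
    rintro rfl
    simpa [zero_pow hm.ne'] using hcm j
  exact ⟨hc0.lt_of_ne' hc, fun i => (hu0 i).lt_of_ne' (right_ne_zero_of_mul (hcm i).ne')⟩

theorem IsPrimitive.exists_pos_mulVec_eq_smul [Nonempty ι] (hA : A.IsPrimitive)
    (hAs : A.IsSymm) : ∃ r : ℝ, 0 < r ∧ ∃ w : ι → ℝ, (∀ i, 0 < w i) ∧ A *ᵥ w = r • w := by
  obtain ⟨r, w, hw0, hw, hAw⟩ := hAs.exists_nonneg_mulVec_eq_smul hA.nonneg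
  obtain ⟨hr, hwpos⟩ := hA.pos_of_mulVec_eq_smul hw0 hw hAw
  exact ⟨r, hr, w, hwpos, hAw⟩

theorem apply_eq_of_pow_apply_pos {α : Type*} (hA : ∀ i j, 0 ≤ A i j) {f : ι → α}
    (hf : ∀ i j, 0 < A i j → f i = f j) (s : ℕ) {i j : ι} (h : 0 < (A ^ s) i j) : f i = f j := by
  induction s generalizing j with
  | zero =>
    rw [pow_zero, one_apply] at h
    split_ifs at h with hij
    · exact congrArg f hij
    · exact absurd h (lt_irrefl 0)
  | succ s ih =>
    rw [pow_succ] at h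
    obtain ⟨k, hik, hkj⟩ := exists_pos_of_mul_apply_pos (pow_apply_nonneg hA s) hA h
    exact (ih hik).trans (hf k j hkj)

theorem IsPrimitive.apply_eq_of_common_neighbor {α : Type*} (hA : A.IsPrimitive)
    (hAs : A.IsSymm) {f : ι → α} (hf : ∀ i j j', 0 < A i j → 0 < A i j' → f j = f j')
    (j j' : ι) : f j = f j' := by
  obtain ⟨m, -, hpos⟩ := hA.exists_pos_pow
  refine apply_eq_of_pow_apply_pos (A := A ^ 2) (pow_apply_nonneg hA.nonneg 2)
    (fun j j' h => ?_) m ?_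
  · rw [sq] at h
    obtain ⟨i, hji, hij'⟩ := exists_pos_of_mul_apply_pos hA.nonneg hA.nonneg h
    exact hf i j j' (by rwa [hAs.apply]) hij'
  · rw [← pow_mul, two_mul, pow_add]
    exact Finset.sum_pos' (fun k _ => mul_nonneg (pow_apply_nonneg hA.nonneg m j k)
      (pow_apply_nonneg hA.nonneg m k j')) ⟨j, Finset.mem_univ _, mul_pos (hpos j j) (hpos j j')⟩

section StrictConvex

variable {E : Type*} [NormedAddCommGroup E] [NormedSpace ℝ E] [StrictConvexSpace ℝ E]

theorem IsPrimitive.inv_norm_smul_eq_of_norm_sum_eq (hA : A.IsPrimitive) (hAs : A.IsSymm)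
    {x : ι → E} (hx : ∀ j, x j ≠ 0) (h : ∀ i, ‖∑ j, A i j • x j‖ = ∑ j, A i j * ‖x j‖)
    (j j' : ι) : ‖x j‖⁻¹ • x j = ‖x j'‖⁻¹ • x j' := by
  refine hA.apply_eq_of_common_neighbor hAs (f := fun j => ‖x j‖⁻¹ • x j)
    (fun i j j' hij hij' => ?_) j j'
  have hi : ‖∑ l, A i l • x l‖ = ∑ l, ‖A i l • x l‖ := by
    simpa [norm_smul, abs_of_nonneg (hA.nonneg i _)] using h i
  have hray : ∀ j, 0 < A i j → SameRay ℝ (x j) (∑ l, A i l • x l) := fun j hj =>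
    (SameRay.sameRay_pos_smul_right (x j) hj).trans
      (sameRay_sum_of_norm_sum_eq_sum_norm hi (Finset.mem_univ j))
      fun h0 => .inl ((smul_eq_zero.1 h0).resolve_left hj.ne')
  have hs : ∑ l, A i l • x l ≠ 0 := by
    rw [← norm_pos_iff, h i]
    exact Finset.sum_pos' (fun l _ => mul_nonneg (hA.nonneg i l) (norm_nonneg _))
      ⟨j, Finset.mem_univ _, mul_pos hij (norm_pos_iff.2 (hx j))⟩
  exact ((hray j hij).trans (hray j' hij').symm fun h0 => absurd h0 hs).inv_norm_smul_eq
    (hx j) (hx j')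

theorem IsPrimitive.exists_eq_norm_smul_of_le_norm_sum (hA : A.IsPrimitive) (hAs : A.IsSymm)
    {w : ι → ℝ} {r : ℝ} (hw : ∀ i, 0 < w i) (hAw : A *ᵥ w = r • w) {x : ι → E} (hx : x ≠ 0)
    (h : ∀ i, r * ‖x i‖ ≤ ‖∑ j, A i j • x j‖) :
    ∃ e : E, ∀ i, x i ≠ 0 ∧ x i = ‖x i‖ • e ∧ ∑ j, A i j • x j = r • x i := by
  set u : ι → ℝ := fun j => ‖x j‖
  have hle : ∀ i, ‖∑ j, A i j • x j‖ ≤ (A *ᵥ u) i := fun i =>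
    (norm_sum_le _ _).trans_eq
      (by simp [u, mulVec, dotProduct, norm_smul, abs_of_nonneg (hA.nonneg i _)])
  have hAu : A *ᵥ u = r • u :=
    hAs.mulVec_eq_smul_of_smul_le_mulVec hw hAw fun i => (h i).trans (hle i)
  obtain ⟨j₀, hj₀⟩ : ∃ j, x j ≠ 0 := Function.ne_iff.1 hx
  have hu : u ≠ 0 := Function.ne_iff.2 ⟨j₀, norm_ne_zero_iff.2 hj₀⟩
  have hx0 : ∀ j, x j ≠ 0 := fun j =>
    norm_pos_iff.1 ((hA.pos_of_mulVec_eq_smul (fun j => norm_nonneg (x j)) hu hAu).2 j)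
  have heq : ∀ i, ‖∑ j, A i j • x j‖ = ∑ j, A i j * ‖x j‖ := fun i =>
    (hle i).antisymm (by simpa [u, hAu] using h i)
  have hdir := hA.inv_norm_smul_eq_of_norm_sum_eq hAs hx0 heq
  have hxe : ∀ i, x i = ‖x i‖ • ‖x j₀‖⁻¹ • x j₀ := fun i => by
    rw [← hdir i j₀, smul_smul, mul_inv_cancel₀ (norm_ne_zero_iff.2 (hx0 i)), one_smul]
  refine ⟨‖x j₀‖⁻¹ • x j₀, fun i => ⟨hx0 i, hxe i, ?_⟩⟩
  calc ∑ j, A i j • x j = (A *ᵥ u) i • ‖x j₀‖⁻¹ • x j₀ := by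
        rw [mulVec, dotProduct, Finset.sum_smul]
        exact Finset.sum_congr rfl fun j _ => by rw [mul_smul, ← hxe]
    _ = r • x i := by rw [hAu, Pi.smul_apply, smul_eq_mul, mul_smul, ← hxe]

end StrictConvex

theorem isPrimitive_map_natCast {A : Matrix ι ι ℕ} (h : ∃ k, 1 ≤ k ∧ ∀ i j, 0 < (A ^ k) i j) :
    (A.map (Nat.cast : ℕ → ℝ)).IsPrimitive := by
  obtain ⟨m, hm, hpos⟩ := h
  refine ⟨fun i j => Nat.cast_nonneg _, m, hm, fun i j => ?_⟩
  have hpow : A.map (Nat.cast : ℕ → ℝ) ^ m = (A ^ m).map (↑) :=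
    (map_pow (Nat.castRingHom ℝ).mapMatrix A m).symm
  simpa [hpow] using hpos i j

end Matrix

section Twisted

variable {ι κ : Type*} [Fintype ι] [Fintype κ] [DecidableEq κ]

def twistedMatrix (A : Matrix ι ι ℝ) (U : ι → Matrix κ κ ℂ) : Matrix (ι × κ) (ι × κ) ℂ :=
  of fun p q => U p.1 p.2 q.2 * A p.1 q.1

def blockVec (v : ι × κ → ℂ) (j : ι) : EuclideanSpace ℂ κ :=
  WithLp.toLp 2 fun a => v (j, a)

theorem blockVec_twistedMatrix_mulVec (A : Matrix ι ι ℝ) (U : ι → Matrix κ κ ℂ)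
    (v : ι × κ → ℂ) (i : ι) :
    blockVec (twistedMatrix A U *ᵥ v) i =
      toEuclideanCLM (𝕜 := ℂ) (U i) (∑ j, A i j • blockVec v j) := by
  ext a
  simp only [blockVec, twistedMatrix, ← WithLp.toLp_sum, ← WithLp.toLp_smul, toEuclideanCLM_toLp]
  simp only [mulVec, dotProduct, Fintype.sum_prod_type, of_apply,
    Finset.sum_apply, Pi.smul_apply, Complex.real_smul, Finset.mul_sum]
  rw [Finset.sum_comm]
  simp only [mul_assoc]

theorem Matrix.IsPrimitive.exists_mulVec_eq_smul_of_twistedMatrix_mulVec_eq_smul [DecidableEq ι]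
    {A : Matrix ι ι ℝ} (hA : A.IsPrimitive) (hAs : A.IsSymm) {w : ι → ℝ} {r : ℝ} (hr : 0 < r)
    (hw : ∀ i, 0 < w i) (hAw : A *ᵥ w = r • w) {U : ι → Matrix κ κ ℂ}
    (hU : ∀ i, U i ∈ unitaryGroup κ ℂ) {v : ι × κ → ℂ} (hv : v ≠ 0) {μ : ℂ}
    (hBv : twistedMatrix A U *ᵥ v = μ • v) (hμ : r ≤ ‖μ‖) :
    ∃ e : κ → ℂ, e ≠ 0 ∧ ∀ i, U i *ᵥ e = (μ / r) • e := by
  set x := blockVec v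
  have hx : ∀ i, μ • x i = toEuclideanCLM (𝕜 := ℂ) (U i) (∑ j, A i j • x j) := fun i => by
    rw [← blockVec_twistedMatrix_mulVec, hBv]
    rfl
  have hnorm : ∀ i, r * ‖x i‖ ≤ ‖∑ j, A i j • x j‖ := fun i =>
    calc r * ‖x i‖ ≤ ‖μ • x i‖ := by rw [norm_smul]; gcongr
      _ = ‖∑ j, A i j • x j‖ := by
        rw [hx i, ContinuousLinearMap.norm_map_of_mem_unitary (Unitary.map_mem _ (hU i))]
  have hx0 : x ≠ 0 := fun h0 =>
    hv (funext fun p => congrFun (congrArg WithLp.ofLp (congrFun h0 p.1)) p.2)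
  obtain ⟨⟨e⟩, he⟩ := hA.exists_eq_norm_smul_of_le_norm_sum hAs hw hAw hx0 hnorm
  obtain ⟨j, -⟩ := Function.ne_iff.1 hx0
  refine ⟨e, fun h0 => (he j).1 (by rw [(he j).2.1, h0]; simp), fun i => ?_⟩
  obtain ⟨hxi, hxe, hs⟩ := he i
  have hμx := congrArg WithLp.ofLp (hx i)
  rw [hs, ContinuousLinearMap.map_smul_of_tower, hxe, ContinuousLinearMap.map_smul_of_tower,
    toEuclideanCLM_toLp] at hμx
  simp only [WithLp.ofLp_smul, ← Complex.coe_smul, smul_smul] at hμx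
  have hr' : (r : ℂ) ≠ 0 := by exact_mod_cast hr.ne'
  have hn : (‖x i‖ : ℂ) ≠ 0 := by exact_mod_cast norm_ne_zero_iff.2 hxi
  rw [← inv_smul_smul₀ (mul_ne_zero hr' hn) (U i *ᵥ e), ← hμx, smul_smul]
  congr 1
  field_simp

theorem Matrix.IsPrimitive.spectralRadius_twistedMatrix_lt [DecidableEq ι] [Nonempty ι]
    {A : Matrix ι ι ℝ} (hA : A.IsPrimitive) (hAs : A.IsSymm) {U : ι → Matrix κ κ ℂ}
    (hU : ∀ i, U i ∈ unitaryGroup κ ℂ)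
    (hcommon : ∀ (e : κ → ℂ) (ν : ℂ), (∀ i, U i *ᵥ e = ν • e) → e = 0) :
    spectralRadius ℂ (twistedMatrix A U) < spectralRadius ℂ (A.map Complex.ofReal) := by
  obtain ⟨r, hr, w, hw, hAw⟩ := hA.exists_pos_mulVec_eq_smul hAs
  have hrA : (r : ℂ) ∈ spectrum ℂ (A.map Complex.ofReal) :=
    mem_spectrum_map_of_mulVec_eq_smul Complex.ofRealHom
      (fun h => (hw (Classical.arbitrary ι)).ne' (congrFun h _)) hAw
  refine (spectrum.spectralRadius_lt_of_forall_lt_of_finite (finite_spectrum _)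
    (by simpa using hr.ne') fun μ hμ => ?_).trans_le (le_iSup₂ (α := ENNReal) _ hrA)
  obtain ⟨v, hv, hBv⟩ := mem_spectrum_iff_exists_mulVec_eq_smul.1 hμ
  rw [← NNReal.coe_lt_coe, coe_nnnorm, coe_nnnorm, Complex.norm_real, Real.norm_of_nonneg hr.le]
  by_contra! hμr
  obtain ⟨e, he, hUe⟩ :=
    hA.exists_mulVec_eq_smul_of_twistedMatrix_mulVec_eq_smul hAs hr hw hAw hU hv hBv hμr
  exact he (hcommon e _ hUe)

end Twisted

section Representation

variable {G ι K : Type*} [Group G] [Fintype ι] [DecidableEq ι] [Field K] [StarRing K]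
  (ρ : G →* unitaryGroup ι K)

theorem forall_exists_mulVec_eq_smul_of_closure {κ : Type*} {t : κ → G}
    (hgen : Subgroup.closure (Set.range t) = ⊤) {e : ι → K}
    (h : ∀ i, ∃ c : K, (ρ (t i) : Matrix ι ι K) *ᵥ e = c • e) (γ : G) :
    ∃ c : K, (ρ γ : Matrix ι ι K) *ᵥ e = c • e := by
  induction (hgen ▸ Subgroup.mem_top γ : γ ∈ Subgroup.closure (Set.range t))
    using Subgroup.closure_induction with
  | mem _ hx =>
    obtain ⟨i, rfl⟩ := hx
    exact h i
  | one => exact ⟨1, by simp⟩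
  | mul γ δ _ _ hγ hδ =>
    obtain ⟨c, hc⟩ := hγ
    obtain ⟨d, hd⟩ := hδ
    exact ⟨c * d, by rw [map_mul, Submonoid.coe_mul, ← mulVec_mulVec, hd, mulVec_smul, hc,
      smul_smul, mul_comm]⟩
  | inv γ _ hγ =>
    obtain ⟨c, hc⟩ := hγ
    refine ⟨c⁻¹, ?_⟩
    have hinv : (ρ γ⁻¹ : Matrix ι ι K) *ᵥ (ρ γ : Matrix ι ι K) *ᵥ e = e := by
      rw [mulVec_mulVec, ← Submonoid.coe_mul, ← map_mul, inv_mul_cancel, map_one,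
        Submonoid.coe_one, one_mulVec]
    rw [hc, mulVec_smul] at hinv
    rcases eq_or_ne c 0 with rfl | hc0
    · obtain rfl : e = 0 := by simpa using hinv.symm
      simp
    · exact (eq_inv_smul_iff₀ hc0).2 hinv

theorem exists_monoidHom_mulVec_eq_smul {e : ι → K} (he : e ≠ 0)
    (h : ∀ γ, ∃ c : K, (ρ γ : Matrix ι ι K) *ᵥ e = c • e) :
    ∃ χ : G →* Kˣ, ∀ γ, (ρ γ : Matrix ι ι K) *ᵥ e = (χ γ : K) • e := by
  choose c hc using h
  have hinj := smul_left_injective K he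
  let χ : G →* K :=
    { toFun := c
      map_one' := hinj (by simp [← hc])
      map_mul' := fun γ δ => hinj <| show c (γ * δ) • e = (c γ * c δ) • e by
        rw [← hc, map_mul, Submonoid.coe_mul, ← mulVec_mulVec, hc, mulVec_smul, hc, smul_smul,
          mul_comm] }
  exact ⟨χ.toHomUnits, hc⟩

theorem eq_zero_of_forall_mulVec_eq_smul {κ : Type*} {t : κ → G}
    (hgen : Subgroup.closure (Set.range t) = ⊤)
    (hchi : ∀ χ : G →* Kˣ, (∃ γ, χ γ ≠ 1) → ∃ i j, χ (t i) ≠ χ (t j))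
    (hirr : ∀ W : Submodule K (ι → K),
      (∀ γ : G, ∀ v ∈ W, (ρ γ : Matrix ι ι K) *ᵥ v ∈ W) → W = ⊥ ∨ W = ⊤)
    (hnontriv : ∃ γ : G, ρ γ ≠ 1) {e : ι → K} {ν : K}
    (h : ∀ i, (ρ (t i) : Matrix ι ι K) *ᵥ e = ν • e) : e = 0 := by
  by_contra he
  obtain ⟨χ, hχ⟩ := exists_monoidHom_mulVec_eq_smul ρ he
    (forall_exists_mulVec_eq_smul_of_closure ρ hgen fun i => ⟨ν, h i⟩)
  have hspan : K ∙ e = ⊤ := by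
    refine (hirr _ fun γ v hv => ?_).resolve_left (by simpa using he)
    obtain ⟨a, rfl⟩ := Submodule.mem_span_singleton.1 hv
    rw [mulVec_smul, hχ, smul_smul]
    exact Submodule.smul_mem _ _ (Submodule.mem_span_singleton_self e)
  obtain ⟨γ, hγ⟩ := hnontriv
  have hχγ : χ γ ≠ 1 := fun h1 => hγ <| Subtype.ext <| toLin'.injective <|
    LinearMap.ext_on hspan fun x hx => by simp [Set.mem_singleton_iff.1 hx, hχ, h1]
  obtain ⟨i, j, hij⟩ := hchi χ ⟨γ, hχγ⟩
  have hν : ∀ i, (χ (t i) : K) = ν := fun i =>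
    smul_left_injective K he ((hχ _).symm.trans (h i))
  exact hij (Units.ext ((hν i).trans (hν j).symm))

end Representation

theorem stmt2_general {Γ : Type*} [Group Γ]
    (n : ℕ) (hn : 1 ≤ n) (A : Fin n → Fin n → ℕ) (t : Fin n → Γ)
    (hsymm : ∀ i j, A i j = A j i)
    (hprim : ∃ k, 1 ≤ k ∧ ∀ i j, 0 < ((Matrix.of A) ^ k) i j)
    (hgen : Subgroup.closure (Set.range t) = ⊤)
    (hchi : ∀ χ : Γ →* ℂˣ, (∃ γ, χ γ ≠ 1) → ∃ i j, χ (t i) ≠ χ (t j))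
    (k : ℕ)
    (ρ : Γ →* Matrix.unitaryGroup (Fin k) ℂ)
    (hirr : ∀ W : Submodule ℂ (Fin k → ℂ),
      (∀ γ : Γ, ∀ v ∈ W, ((ρ γ : Matrix (Fin k) (Fin k) ℂ)).mulVec v ∈ W) →
        W = ⊥ ∨ W = ⊤)
    (hnontriv : ∃ γ : Γ, ρ γ ≠ 1) :
    spectralRadius ℂ
        (Matrix.of fun p q : Fin n × Fin k =>
          ((ρ (t p.1) : Matrix (Fin k) (Fin k) ℂ) p.2 q.2) * (A p.1 q.1 : ℂ))
      < spectralRadius ℂ (Matrix.of fun i j : Fin n => (A i j : ℂ)) := by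
  set Ar : Matrix (Fin n) (Fin n) ℝ := (of A).map (↑)
  have hAr : Ar.IsPrimitive := isPrimitive_map_natCast hprim
  have hArs : Ar.IsSymm := IsSymm.ext fun i j => by simp [Ar, hsymm]
  have : Nonempty (Fin n) := ⟨⟨0, hn⟩⟩
  have hB : (of fun p q : Fin n × Fin k =>
      (ρ (t p.1) : Matrix (Fin k) (Fin k) ℂ) p.2 q.2 * (A p.1 q.1 : ℂ)) =
      twistedMatrix Ar fun i => (ρ (t i) : Matrix (Fin k) (Fin k) ℂ) := by
    ext
    simp [twistedMatrix, Ar]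
  have hM : (of fun i j : Fin n => (A i j : ℂ)) = Ar.map Complex.ofReal := by
    ext
    simp [Ar]
  rw [hB, hM]
  exact hAr.spectralRadius_twistedMatrix_lt hArs (fun i => (ρ (t i)).2) fun e ν h =>
    eq_zero_of_forall_mulVec_eq_smul ρ hgen hchi hirr hnontriv h

/-- for a nontrivial irreducible unitary representation `ρ`, the
spectral radius of the twisted adjacency matrix is strictly smaller than the
spectral radius of the adjacency matrix. -/
theorem stmt2 {Γ : Type*} [Group Γ] [Fintype Γ]
    (n : ℕ) (hn : 1 ≤ n) (A : Fin n → Fin n → ℕ) (t : Fin n → Γ)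
    (hsymm : ∀ i j, A i j = A j i)
    (hprim : ∃ k, 1 ≤ k ∧ ∀ i j, 0 < ((Matrix.of A) ^ k) i j)
    (hgen : Subgroup.closure (Set.range t) = ⊤)
    (hchi : ∀ χ : Γ →* ℂˣ, (∃ γ, χ γ ≠ 1) → ∃ i j, χ (t i) ≠ χ (t j))
    (k : ℕ) (hk : 1 ≤ k)
    (ρ : Γ →* Matrix.unitaryGroup (Fin k) ℂ)
    (hirr : ∀ W : Submodule ℂ (Fin k → ℂ),
      (∀ γ : Γ, ∀ v ∈ W, ((ρ γ : Matrix (Fin k) (Fin k) ℂ)).mulVec v ∈ W) →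
        W = ⊥ ∨ W = ⊤)
    (hnontriv : ∃ γ : Γ, ρ γ ≠ 1) :
    spectralRadius ℂ
        (Matrix.of fun p q : Fin n × Fin k =>
          ((ρ (t p.1) : Matrix (Fin k) (Fin k) ℂ) p.2 q.2) * (A p.1 q.1 : ℂ))
      < spectralRadius ℂ (Matrix.of fun i j : Fin n => (A i j : ℂ)) :=
  stmt2_general n hn A t hsymm hprim hgen hchi k ρ hirr hnontriv
end

section
/- Let k be a field, d ≥ 2, 1 ≤ m < d, and let α, β ∈ k with α ≠ 0. Then there exists a nonzero multivariable polynomial F ∈ MvPolynomial (Fin (d−1)) k such that for every monic polynomial p ∈ k[X] with natDegree p = d and constant coefficient p.coeff 0 = β which admits a factorization p = q * r with q monic, natDegree q = m, and q.coeff 0 = α, one has F evaluated at the tuple (p.coeff 1, p.coeff 2, …, p.coeff (d−1)) equal to 0. In other words, the set of such polynomials, identified with points of k^{d−1} via their non-constant, non-leading coefficients, is contained in an affine hypersurface. -/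
/-!
Writing `p = q * r` with `q` monic of degree `m`, `q(0) = α`, the cofactor `r` is monic of
degree `d - m` with `r(0) = β / α`. So the `d - 1` middle coefficients of `p` are polynomial
functions of the `(m - 1) + (d - m - 1) = d - 2` middle coefficients of `q` and `r`. But
`d - 1` polynomials in `d - 2` variables are never algebraically independent, since the
transcendence degree of `k[x₁, …, x_{d-2}]` is `d - 2`; a nontrivial relation `F` among them is
the required hypersurface.
-/

open Polynomial

namespace MvPolynomial

theorem exists_ne_zero_aeval_eq_zero_of_card_lt {R σ ι : Type*} [CommRing R] [IsDomain R]
    [Fintype σ] [Fintype ι] (hcard : Fintype.card σ < Fintype.card ι)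
    (c : ι → MvPolynomial σ R) : ∃ F : MvPolynomial ι R, F ≠ 0 ∧ aeval c F = 0 := by
  have hdep : ¬ AlgebraicIndependent R c := fun h => by
    have := h.lift_cardinalMk_le_trdeg
    simp only [Cardinal.mk_fintype, Cardinal.lift_natCast, trdeg_of_isDomain, Nat.cast_le] at this
    exact hcard.not_ge this
  simpa [algebraicIndependent_iff, and_comm] using hdep

theorem exists_ne_zero_eval_eq_zero_of_card_lt {R σ ι : Type*} [CommRing R] [IsDomain R]
    [Fintype σ] [Fintype ι] (hcard : Fintype.card σ < Fintype.card ι)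
    (c : ι → MvPolynomial σ R) :
    ∃ F : MvPolynomial ι R, F ≠ 0 ∧ ∀ v : σ → R, eval (fun i => eval v (c i)) F = 0 := by
  obtain ⟨F, hF, hcF⟩ := exists_ne_zero_aeval_eq_zero_of_card_lt hcard c
  refine ⟨F, hF, fun v => ?_⟩
  have := eval₂Hom_bind₁ (RingHom.id R) v c F
  rw [← aeval_eq_bind₁, hcF, map_zero] at this
  exact this.symm

end MvPolynomial

namespace Polynomial

variable {R S : Type*} [CommSemiring R] [CommSemiring S]

noncomputable def monicOfCoeffs (n : ℕ) (a₀ : R) (a : Fin (n - 1) → R) : R[X] :=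
  X ^ n + ∑ j : Fin (n - 1), C (a j) * X ^ (j.val + 1) + C a₀

theorem map_monicOfCoeffs (f : R →+* S) (n : ℕ) (a₀ : R) (a : Fin (n - 1) → R) :
    (monicOfCoeffs n a₀ a).map f = monicOfCoeffs n (f a₀) (f ∘ a) := by
  simp [monicOfCoeffs, Polynomial.map_sum]

theorem Monic.eq_monicOfCoeffs {p : R[X]} (hp : p.Monic) {n : ℕ} (hn : 1 ≤ n)
    (hpn : p.natDegree = n) :
    p = monicOfCoeffs n (p.coeff 0) (fun j => p.coeff (j.val + 1)) := by
  obtain ⟨n, rfl⟩ := Nat.exists_eq_add_of_le' hn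
  conv_lhs => rw [hp.as_sum, hpn, Finset.sum_range_succ']
  simp [monicOfCoeffs, add_assoc,
    Fin.sum_univ_eq_sum_range (fun j => C (p.coeff (j + 1)) * X ^ (j + 1))]

end Polynomial

theorem stmt5_general {k : Type*} [Field k] (d m : ℕ)
    (hm1 : 1 ≤ m) (hmd : m < d) (α β : k) (hα : α ≠ 0) :
    ∃ F : MvPolynomial (Fin (d - 1)) k, F ≠ 0 ∧
      ∀ p q r : Polynomial k,
        p.Monic → p.natDegree = d → p.coeff 0 = β →
        q.Monic → q.natDegree = m → q.coeff 0 = α →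
        p = q * r →
        MvPolynomial.eval (fun i : Fin (d - 1) => p.coeff (i.val + 1)) F = 0 := by
  let G : (MvPolynomial (Fin (m - 1) ⊕ Fin (d - m - 1)) k)[X] :=
    monicOfCoeffs m (.C α) (.X ∘ Sum.inl) * monicOfCoeffs (d - m) (.C (β / α)) (.X ∘ Sum.inr)
  obtain ⟨F, hF, hFG⟩ := MvPolynomial.exists_ne_zero_eval_eq_zero_of_card_lt
    (by simp only [Fintype.card_sum, Fintype.card_fin]; omega) fun i : Fin (d - 1) => G.coeff (i + 1)
  refine ⟨F, hF, fun p q r hp hpd hp0 hq hqd hq0 hpqr => ?_⟩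
  have hr : r.Monic := hq.of_mul_monic_left (hpqr ▸ hp)
  have hrd : r.natDegree = d - m := by
    have := hq.natDegree_mul hr
    rw [← hpqr] at this
    omega
  have hr0 : r.coeff 0 = β / α := by
    rw [eq_div_iff hα, ← hp0, hpqr, mul_coeff_zero, hq0, mul_comm]
  let v := Sum.elim (fun j : Fin (m - 1) => q.coeff (j.val + 1))
    fun j : Fin (d - m - 1) => r.coeff (j.val + 1)
  have hqv : q = (monicOfCoeffs m (.C α) (.X ∘ Sum.inl)).map (MvPolynomial.eval v) := by
    rw [map_monicOfCoeffs]
    simpa [← hq0, Function.comp_def, v] using hq.eq_monicOfCoeffs hm1 hqd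
  have hrv : r = (monicOfCoeffs (d - m) (.C (β / α)) (.X ∘ Sum.inr)).map (MvPolynomial.eval v) := by
    rw [map_monicOfCoeffs]
    simpa [← hr0, Function.comp_def, v] using hr.eq_monicOfCoeffs (by omega) hrd
  have hpv : p = G.map (MvPolynomial.eval v) := by
    rw [hpqr, Polynomial.map_mul, ← hqv, ← hrv]
  rw [hpv]
  simpa only [coeff_map] using hFG v

/-- the monic degree-`d` polynomials with constant coefficient
`β` admitting a monic degree-`m` factor with constant coefficient `α ≠ 0` lie
on an affine hypersurface of `k^{d-1}` (coordinates: the coefficients of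
`X, …, X^{d-1}`). -/
theorem stmt5 {k : Type*} [Field k] (d m : ℕ) (hd : 2 ≤ d)
    (hm1 : 1 ≤ m) (hmd : m < d) (α β : k) (hα : α ≠ 0) :
    ∃ F : MvPolynomial (Fin (d - 1)) k, F ≠ 0 ∧
      ∀ p q r : Polynomial k,
        p.Monic → p.natDegree = d → p.coeff 0 = β →
        q.Monic → q.natDegree = m → q.coeff 0 = α →
        p = q * r →
        MvPolynomial.eval (fun i : Fin (d - 1) => p.coeff (i.val + 1)) F = 0 :=
  stmt5_general d m hm1 hmd α β hα
end

section
/- Fix d ≥ 2. There exists a constant C > 0, depending only on d, such that for every prime p, the number of monic polynomials f ∈ (ZMod p)[X] with natDegree f = d and f.coeff 0 = 1 that admit a monic factor q with 0 < natDegree q < d and q.coeff 0 = 1 is at most C · p^{d−2}. Consequently, the proportion of such polynomials among all p^{d−1} monic polynomials of degree d with constant coefficient 1 over ZMod p is O(1/p). -/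
private lemma poly_ext_of_coeff_lt {K : Type*} [Semiring K] {q q' : Polynomial K}
    (hq : q.Monic) (hq' : q'.Monic) (h : q.natDegree = q'.natDegree)
    (hc : ∀ i < q.natDegree, q.coeff i = q'.coeff i) : q = q' := by
  ext i
  rcases lt_trichotomy i q.natDegree with hi | hi | hi
  · exact hc i hi
  · subst hi
    rw [hq.coeff_natDegree, h, hq'.coeff_natDegree]
  · rw [Polynomial.coeff_eq_zero_of_natDegree_lt hi,
      Polynomial.coeff_eq_zero_of_natDegree_lt (h ▸ hi)]

/-- the number of monic polynomials of degree `d` over `ZMod p`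
with constant coefficient `1` having a monic proper factor with constant
coefficient `1` is `O(p^{d-2})`, uniformly in the prime `p`; hence their
proportion among all `p^{d-1}` such polynomials is `O(1/p)`. -/
theorem stmt6 (d : ℕ) (hd : 2 ≤ d) :
    ∃ C : ℝ, 0 < C ∧ ∀ p : ℕ, p.Prime →
      (Set.ncard {f : Polynomial (ZMod p) |
          f.Monic ∧ f.natDegree = d ∧ f.coeff 0 = 1 ∧
          ∃ q : Polynomial (ZMod p), q.Monic ∧ 0 < q.natDegree ∧
            q.natDegree < d ∧ q.coeff 0 = 1 ∧ q ∣ f} : ℝ)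
        ≤ C * (p : ℝ) ^ (d - 2) := by
  refine ⟨d, by positivity, ?_⟩
  intro p hp
  haveI := Fact.mk hp
  set S : Set (Polynomial (ZMod p)) := {f : Polynomial (ZMod p) |
      f.Monic ∧ f.natDegree = d ∧ f.coeff 0 = 1 ∧
      ∃ q : Polynomial (ZMod p), q.Monic ∧ 0 < q.natDegree ∧
        q.natDegree < d ∧ q.coeff 0 = 1 ∧ q ∣ f} with hS
  set T : Set (Polynomial (ZMod p) × Polynomial (ZMod p)) := {x |
      x.1.Monic ∧ 0 < x.1.natDegree ∧ x.1.natDegree < d ∧ x.1.coeff 0 = 1 ∧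
      x.2.Monic ∧ x.2.coeff 0 = 1 ∧ x.1.natDegree + x.2.natDegree = d} with hT
  have hd0 : 0 < d := by omega
  let Φ : Polynomial (ZMod p) × Polynomial (ZMod p) → Fin d × (Fin (d - 2) → ZMod p) := fun x =>
    (⟨min x.1.natDegree (d - 1), by omega⟩,
      fun i => if (i : ℕ) < x.1.natDegree - 1 then x.1.coeff (i + 1)
        else x.2.coeff ((i : ℕ) - (x.1.natDegree - 1) + 1))
  have hinj : Set.InjOn Φ T := by
    rintro ⟨q, r⟩ ⟨hqm, hqpos, hqlt, hqc, hrm, hrc, hsum⟩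
      ⟨q', r'⟩ ⟨hqm', hqpos', hqlt', hqc', hrm', hrc', hsum'⟩ h
    simp only at hqm hqpos hqlt hqc hrm hrc hsum hqm' hqpos' hqlt' hqc' hrm' hrc' hsum'
    have h1 := congrArg Prod.fst h
    have h2 := congrArg Prod.snd h
    simp only [Φ] at h1 h2
    have hmin : min q.natDegree (d - 1) = min q'.natDegree (d - 1) := by
      have := congrArg Fin.val h1
      simpa using this
    have he : q.natDegree = q'.natDegree := by omega
    have hq : q = q' := by
      refine poly_ext_of_coeff_lt hqm hqm' he ?_
      intro i hi
      rcases Nat.eq_zero_or_pos i with hi0 | hi0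
      · subst hi0; rw [hqc, hqc']
      · have hidx : i - 1 < d - 2 := by omega
        have h3 := congrFun h2 ⟨i - 1, hidx⟩
        simp only [Fin.val_mk] at h3
        rw [if_pos (show i - 1 < q.natDegree - 1 by omega),
          if_pos (show i - 1 < q'.natDegree - 1 by omega)] at h3
        rwa [Nat.sub_add_cancel hi0] at h3
    have her : r.natDegree = r'.natDegree := by omega
    have hr : r = r' := by
      refine poly_ext_of_coeff_lt hrm hrm' her ?_
      intro j hj
      have hrd : r.natDegree = d - q.natDegree := by omega
      rcases Nat.eq_zero_or_pos j with hj0 | hj0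
      · subst hj0; rw [hrc, hrc']
      · have hidx : j + q.natDegree - 2 < d - 2 := by omega
        have h3 := congrFun h2 ⟨j + q.natDegree - 2, hidx⟩
        simp only [Fin.val_mk] at h3
        rw [if_neg (show ¬ (j + q.natDegree - 2 < q.natDegree - 1) by omega),
          if_neg (show ¬ (j + q.natDegree - 2 < q'.natDegree - 1) by omega)] at h3
        have harg : j + q.natDegree - 2 - (q.natDegree - 1) + 1 = j := by omega
        have harg' : j + q.natDegree - 2 - (q'.natDegree - 1) + 1 = j := by omega
        rwa [harg, harg'] at h3
    rw [Prod.mk.injEq]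
    exact ⟨hq, hr⟩
  have hTfin : T.Finite :=
    Set.Finite.of_finite_image (Set.toFinite _) hinj
  have hsub : S ⊆ (fun x : Polynomial (ZMod p) × Polynomial (ZMod p) => x.1 * x.2) '' T := by
    rintro f ⟨hfm, hfd, hfc, q, hqm, hqpos, hqlt, hqc, hdvd⟩
    obtain ⟨r, hr⟩ := hdvd
    have hrm : r.Monic := by
      have : (q * r).Monic := hr ▸ hfm
      exact hqm.of_mul_monic_left this
    have hdeg : q.natDegree + r.natDegree = d := by
      have := hqm.natDegree_mul hrm
      rw [← hr] at this
      omega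
    have hrc : r.coeff 0 = 1 := by
      have : f.coeff 0 = q.coeff 0 * r.coeff 0 := by
        rw [hr, Polynomial.mul_coeff_zero]
      rw [hfc, hqc, one_mul] at this
      exact this.symm
    exact ⟨(q, r), ⟨hqm, hqpos, hqlt, hqc, hrm, hrc, hdeg⟩, hr.symm⟩
  have h1 : S.ncard ≤ T.ncard :=
    le_trans (Set.ncard_le_ncard hsub (hTfin.image _)) (Set.ncard_image_le hTfin)
  have h2 : T.ncard ≤ (Set.univ : Set (Fin d × (Fin (d - 2) → ZMod p))).ncard :=
    Set.ncard_le_ncard_of_injOn Φ (fun a _ => Set.mem_univ _) hinj (Set.toFinite _)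
  have h3 : (Set.univ : Set (Fin d × (Fin (d - 2) → ZMod p))).ncard = d * p ^ (d - 2) := by
    rw [Set.ncard_univ, Nat.card_eq_fintype_card, Fintype.card_prod,
      Fintype.card_fin, Fintype.card_fun, Fintype.card_fin, ZMod.card]
  have hfin : S.ncard ≤ d * p ^ (d - 2) := by omega
  calc (S.ncard : ℝ) ≤ ((d * p ^ (d - 2) : ℕ) : ℝ) := by exact_mod_cast hfin
    _ = (d : ℝ) * (p : ℝ) ^ (d - 2) := by push_cast; ring
end

section
/- Let R be a commutative ring with 1, let n ≥ 1, and let p ∈ R[X] be a monic reciprocal polynomial of degree 2n, i.e. p is monic with natDegree p = 2n and p.coeff i = p.coeff (2n − i) for all i ≤ 2n. Then there exists a matrix M ∈ Sp(2n, R), the symplectic group over R, whose characteristic polynomial Matrix.charpoly M equals p. -/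
open Polynomial Matrix Finset

namespace Kirby17

variable {R : Type*} [CommRing R]

/-- The generalized companion matrix `u•1 - v•C` where `C` is the companion-type
matrix with subdiagonal ones and last column `-a i`. -/
def gmat (n : ℕ) (u v : R) (a : ℕ → R) : Matrix (Fin n) (Fin n) R :=
  Matrix.of fun i j =>
    ((if (i : ℕ) = (j : ℕ) then u else 0) - (if (i : ℕ) = (j : ℕ) + 1 then v else 0))
      + (if (j : ℕ) = n - 1 then v * a i else 0)

theorem det_gmat (n : ℕ) : ∀ (u v : R) (a : ℕ → R),
    (gmat n u v a).det = u ^ n + ∑ k ∈ Finset.range n, a k * u ^ k * v ^ (n - k) := by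
  induction n with
  | zero => intro u v a; simp [Matrix.det_fin_zero]
  | succ m ih =>
    intro u v a
    rcases Nat.eq_zero_or_pos m with rfl | hm
    · simp [Matrix.det_fin_one, gmat]
      ring
    · obtain ⟨m', rfl⟩ : ∃ m', m = m' + 1 := ⟨m - 1, by omega⟩
      rw [Matrix.det_succ_column_zero, Fin.sum_univ_succ, Fin.sum_univ_succ]
      have htail : ∀ i : Fin m', ((-1 : R) ^ ((i.succ.succ : Fin (m' + 2)) : ℕ) *
          gmat (m' + 2) u v a i.succ.succ 0 *
          ((gmat (m' + 2) u v a).submatrix i.succ.succ.succAbove Fin.succ).det) = 0 := by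
        intro i
        have : gmat (m' + 2) u v a i.succ.succ 0 = 0 := by
          simp [gmat]
        rw [this]; ring
      rw [Finset.sum_eq_zero fun i _ => htail i, add_zero]
      have h00 : gmat (m' + 2) u v a 0 0 = u := by simp [gmat]
      have h10 : gmat (m' + 2) u v a 1 0 = -v := by simp [gmat]
      have hsub0 : (gmat (m' + 2) u v a).submatrix (0 : Fin (m'+2)).succAbove Fin.succ
          = gmat (m' + 1) u v (fun k => a (k + 1)) := by
        ext i j
        simp only [Matrix.submatrix_apply, Fin.zero_succAbove, gmat, Matrix.of_apply,
          Fin.val_succ]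
        congr 1
        · congr 1
          · simp [Nat.succ_inj]
          · by_cases h : (i : ℕ) = (j : ℕ) + 2 <;> simp [h] <;> omega
        · by_cases h : (j : ℕ) = m' <;> simp [h] <;> omega
      have hcast : ∀ r : Fin m', (((1 : Fin (m'+2)).succAbove r.succ : Fin (m'+2)) : ℕ)
          = (r : ℕ) + 2 := by
        intro r
        simp [Fin.succAbove, Fin.lt_def]
      have hM10 : ((gmat (m' + 2) u v a).submatrix (1 : Fin (m'+2)).succAbove Fin.succ).det
          = a 0 * v ^ (m' + 1) := by
        rw [Matrix.det_succ_row_zero]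
        have hrow : ∀ j : Fin (m' + 1),
            (gmat (m' + 2) u v a).submatrix (1 : Fin (m'+2)).succAbove Fin.succ 0 j
              = if (j : ℕ) = m' then v * a 0 else 0 := by
          intro j
          rw [Matrix.submatrix_apply]
          have h0 : (((1 : Fin (m'+2)).succAbove 0 : Fin (m'+2)) : ℕ) = 0 := rfl
          simp only [gmat, Matrix.of_apply, h0, Fin.val_succ]
          have h1 : ¬((0:ℕ) = (j:ℕ) + 1) := by omega
          have h2 : ¬((0:ℕ) = (j:ℕ) + 1 + 1) := by omega
          rw [if_neg h1, if_neg h2]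
          by_cases h : (j : ℕ) = m'
          · have h' : (j:ℕ) + 1 = m' + 2 - 1 := by omega
            simp [h', h]
          · have h' : ¬((j:ℕ) + 1 = m' + 2 - 1) := by omega
            simp [h', h]
        have hKdet : (((gmat (m' + 2) u v a).submatrix (1 : Fin (m'+2)).succAbove
            Fin.succ).submatrix Fin.succ (Fin.last m').succAbove).det = (-v) ^ m' := by
          have hK : ∀ r t : Fin m',
              (((gmat (m' + 2) u v a).submatrix (1 : Fin (m'+2)).succAbove
                Fin.succ).submatrix Fin.succ (Fin.last m').succAbove) r t
              = (if (t : ℕ) = (r : ℕ) + 1 then u else 0)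
                - (if (r:ℕ) = (t:ℕ) then v else 0) := by
            intro r t
            simp only [Matrix.submatrix_apply, Fin.succAbove_last, gmat, Matrix.of_apply,
              hcast, Fin.val_succ, Fin.coe_castSucc]
            have h3 : ¬((t:ℕ) + 1 = m' + 2 - 1) := by omega
            rw [if_neg h3, add_zero]
            congr 1
            · exact if_congr (by omega) rfl rfl
            · exact if_congr (by omega) rfl rfl
          rw [Matrix.det_of_upperTriangular]
          · have hdiag : ∀ r : Fin m',
                (((gmat (m' + 2) u v a).submatrix (1 : Fin (m'+2)).succAbove
                  Fin.succ).submatrix Fin.succ (Fin.last m').succAbove) r r = -v := by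
              intro r
              rw [hK r r]
              simp
            rw [Finset.prod_congr rfl fun r _ => hdiag r]
            simp
          · intro r t hlt
            rw [hK]
            have h4 : ¬((t:ℕ) = (r:ℕ) + 1) := by
              have := hlt; simp only [id] at this; omega
            have h5 : ¬((r:ℕ) = (t:ℕ)) := by
              have := hlt; simp only [id] at this; omega
            rw [if_neg h4, if_neg h5, sub_zero]
        rw [Finset.sum_eq_single (Fin.last m')]
        · rw [hrow]
          simp only [Fin.val_last, if_pos rfl, hKdet]
          have hsq : ((-1 : R)) ^ m' * (-v) ^ m' = v ^ m' := by
            rw [neg_pow v, ← mul_assoc, ← mul_pow]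
            simp
          calc ((-1:R)) ^ ((Fin.last m' : Fin (m'+1)) : ℕ) * (v * a 0) * (-v) ^ m'
              = ((-1:R)^ m' * (-v) ^ m') * (v * a 0) := by rw [Fin.val_last]; ring
            _ = a 0 * v ^ (m' + 1) := by rw [hsq]; ring
        · intro j _ hj
          have hne : (j : ℕ) ≠ m' := by
            intro h; exact hj (Fin.ext (by simpa using h))
          rw [hrow j, if_neg hne]
          ring
        · intro h; exact absurd (Finset.mem_univ _) h
      simp only [show m' + 1 + 1 = m' + 2 from rfl,
        show (Fin.succ (0 : Fin (m' + 1))) = (1 : Fin (m' + 2)) from rfl]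
      rw [hsub0, ih u v (fun k => a (k+1)), hM10, h00, h10]
      simp only [Fin.val_zero, Fin.val_one, pow_zero, pow_one, one_mul]
      rw [Finset.sum_range_succ' (fun k => a k * u ^ k * v ^ (m' + 2 - k)) (m'+1),
        mul_add, Finset.mul_sum]
      have hterm2 : ∀ k ∈ Finset.range (m'+1),
          u * (a (k+1) * u ^ k * v ^ (m' + 1 - k))
            = a (k+1) * u ^ (k+1) * v ^ (m' + 2 - (k+1)) := by
        intro k hk
        rw [Nat.succ_sub_succ]
        ring
      rw [Finset.sum_congr rfl hterm2]
      simp only [Nat.sub_zero]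
      ring

/-- Hankel matrix of coefficients. -/
def hank (n : ℕ) (a : ℕ → R) : Matrix (Fin n) (Fin n) R :=
  Matrix.of fun i j => a ((i : ℕ) + (j : ℕ) + 1)

theorem hank_transpose (n : ℕ) (a : ℕ → R) : (hank n a)ᵀ = hank n a := by
  ext i j
  show a ((j : ℕ) + i + 1) = a ((i : ℕ) + j + 1)
  congr 1
  omega

theorem isUnit_det_hank (n : ℕ) (a : ℕ → R) (h1 : a n = 1)
    (h0 : ∀ k, n < k → a k = 0) : IsUnit (hank n a).det := by
  have hL : ((hank n a).submatrix (⇑(Fin.revPerm : Equiv.Perm (Fin n))) id).det = 1 := by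
    rw [Matrix.det_of_lowerTriangular]
    · apply Finset.prod_eq_one
      intro i _
      show a (((i.rev : Fin n) : ℕ) + (i : ℕ) + 1) = 1
      have hv : ((i.rev : Fin n) : ℕ) + (i : ℕ) + 1 = n := by
        have h := i.is_lt
        rw [Fin.val_rev]
        omega
      rw [hv, h1]
    · intro i j hij
      show a (((i.rev : Fin n) : ℕ) + (j : ℕ) + 1) = 0
      apply h0
      have h := i.is_lt
      have h2 : (i : ℕ) < (j : ℕ) := hij
      rw [Fin.val_rev]
      omega
  have hp := Matrix.det_permute (Fin.revPerm : Equiv.Perm (Fin n)) (hank n a)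
  rw [hL] at hp
  rcases Int.units_eq_one_or (Equiv.Perm.sign (Fin.revPerm : Equiv.Perm (Fin n))) with h | h <;>
      rw [h] at hp <;> simp at hp
  · exact hp ▸ isUnit_one
  · rw [eq_comm, neg_eq_iff_eq_neg] at hp
    rw [hp]
    exact (isUnit_one.neg)

/-- Companion-type matrix. -/
def comp (n : ℕ) (a : ℕ → R) : Matrix (Fin n) (Fin n) R :=
  Matrix.of fun i j =>
    (if (i : ℕ) = (j : ℕ) + 1 then 1 else 0) - (if (j : ℕ) = n - 1 then a i else 0)

theorem comp_mul_hank_apply (n : ℕ) (hn : 0 < n) (a : ℕ → R) (i j : Fin n) :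
    (comp n a * hank n a) i j
      = (if (i : ℕ) = 0 then 0 else a ((i : ℕ) + j)) - a i * a (n + j) := by
  rw [Matrix.mul_apply]
  have hsplit : ∀ k : Fin n, comp n a i k * hank n a k j
      = (if (i : ℕ) = (k : ℕ) + 1 then a ((k : ℕ) + j + 1) else 0)
        - (if (k : ℕ) = n - 1 then a i * a ((k : ℕ) + j + 1) else 0) := by
    intro k
    show ((if (i : ℕ) = (k : ℕ) + 1 then (1:R) else 0)
        - (if (k : ℕ) = n - 1 then a i else 0)) * a ((k : ℕ) + j + 1) = _
    rw [sub_mul, ite_mul, ite_mul, one_mul, zero_mul]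
  rw [Finset.sum_congr rfl fun k _ => hsplit k, Finset.sum_sub_distrib]
  congr 1
  · by_cases hi : (i : ℕ) = 0
    · rw [if_pos hi]
      apply Finset.sum_eq_zero
      intro k _
      rw [if_neg (by omega)]
    · rw [if_neg hi]
      obtain ⟨i', hi'⟩ : ∃ i', (i : ℕ) = i' + 1 := ⟨(i : ℕ) - 1, by omega⟩
      have hlt : i' < n := by have := i.is_lt; omega
      rw [Finset.sum_eq_single (⟨i', hlt⟩ : Fin n)]
      · rw [if_pos (by simp [hi'])]
        congr 1
        simp
        omega
      · intro k _ hk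
        rw [if_neg]
        intro hc
        exact hk (Fin.ext (by simp; omega))
      · intro h; exact absurd (Finset.mem_univ _) h
  · have hlt : n - 1 < n := by omega
    rw [Finset.sum_eq_single (⟨n - 1, hlt⟩ : Fin n)]
    · rw [if_pos (by simp)]
      congr 2
      simp
      omega
    · intro k _ hk
      rw [if_neg]
      intro hc
      exact hk (Fin.ext (by simp [hc]))
    · intro h; exact absurd (Finset.mem_univ _) h

theorem hank_mul_compT_apply (n : ℕ) (hn : 0 < n) (a : ℕ → R) (i j : Fin n) :
    (hank n a * (comp n a)ᵀ) i j
      = (if (j : ℕ) = 0 then 0 else a ((i : ℕ) + j)) - a ((i : ℕ) + n) * a j := by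
  rw [Matrix.mul_apply]
  have hsplit : ∀ k : Fin n, hank n a i k * (comp n a)ᵀ k j
      = (if (j : ℕ) = (k : ℕ) + 1 then a ((i : ℕ) + k + 1) else 0)
        - (if (k : ℕ) = n - 1 then a ((i : ℕ) + k + 1) * a j else 0) := by
    intro k
    show a ((i : ℕ) + k + 1) * ((if (j : ℕ) = (k : ℕ) + 1 then (1:R) else 0)
        - (if (k : ℕ) = n - 1 then a j else 0)) = _
    rw [mul_sub, mul_ite, mul_ite, mul_one, mul_zero]
  rw [Finset.sum_congr rfl fun k _ => hsplit k, Finset.sum_sub_distrib]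
  congr 1
  · by_cases hj : (j : ℕ) = 0
    · rw [if_pos hj]
      apply Finset.sum_eq_zero
      intro k _
      rw [if_neg (by omega)]
    · rw [if_neg hj]
      obtain ⟨j', hj'⟩ : ∃ j', (j : ℕ) = j' + 1 := ⟨(j : ℕ) - 1, by omega⟩
      have hlt : j' < n := by have := j.is_lt; omega
      rw [Finset.sum_eq_single (⟨j', hlt⟩ : Fin n)]
      · rw [if_pos (by simp [hj'])]
        congr 1
        simp
        omega
      · intro k _ hk
        rw [if_neg]
        intro hc
        exact hk (Fin.ext (by simp; omega))
      · intro h; exact absurd (Finset.mem_univ _) h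
  · have hlt : n - 1 < n := by omega
    rw [Finset.sum_eq_single (⟨n - 1, hlt⟩ : Fin n)]
    · rw [if_pos (by simp)]
      congr 2
      simp
      omega
    · intro k _ hk
      rw [if_neg]
      intro hc
      exact hk (Fin.ext (by simp [hc]))
    · intro h; exact absurd (Finset.mem_univ _) h

theorem comp_hank_comm (n : ℕ) (hn : 0 < n) (a : ℕ → R) (h1 : a n = 1)
    (h0 : ∀ k, n < k → a k = 0) :
    comp n a * hank n a = hank n a * (comp n a)ᵀ := by
  ext i j
  rw [comp_mul_hank_apply n hn a i j, hank_mul_compT_apply n hn a i j]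
  by_cases hi : (i : ℕ) = 0 <;> by_cases hj : (j : ℕ) = 0
  · rw [if_pos hi, if_pos hj, hi, hj]
    rw [show n + 0 = n from rfl, show (0:ℕ) + n = n from by omega, h1]
    ring
  · rw [if_pos hi, if_neg hj, hi]
    rw [show (0:ℕ) + n = n from by omega, h1, h0 (n + (j:ℕ)) (by omega)]
    rw [show (0:ℕ) + (j:ℕ) = (j:ℕ) from by omega]
    ring
  · rw [if_neg hi, if_pos hj, hj]
    rw [show n + 0 = n from rfl, h1, h0 ((i:ℕ) + n) (by omega)]
    rw [show (i:ℕ) + 0 = (i:ℕ) from rfl]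
    ring
  · rw [if_neg hi, if_neg hj, h0 (n + (j:ℕ)) (by omega), h0 ((i:ℕ) + n) (by omega)]
    ring

theorem coeff_X_sq_add_one_pow (k d : ℕ) :
    ((X ^ 2 + 1 : R[X]) ^ k).coeff d
      = if Even d then (k.choose (d / 2) : R) else 0 := by
  rw [add_pow, Polynomial.finset_sum_coeff]
  have hterm : ∀ j ∈ Finset.range (k+1),
      ((X ^ 2 : R[X]) ^ j * 1 ^ (k - j) * (k.choose j : R[X])).coeff d
        = if d = 2 * j then (k.choose j : R) else 0 := by
    intro j _
    rw [one_pow, mul_one, ← pow_mul, mul_comm, ← Polynomial.C_eq_natCast,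
      Polynomial.coeff_C_mul, Polynomial.coeff_X_pow]
    rw [mul_ite, mul_one, mul_zero]
  rw [Finset.sum_congr rfl hterm]
  by_cases he : Even d
  · obtain ⟨s, hs⟩ := he
    have hd2 : d / 2 = s := by omega
    by_cases hs2 : s ≤ k
    · rw [Finset.sum_eq_single_of_mem s (Finset.mem_range.mpr (by omega))]
      · rw [if_pos (by omega), if_pos ⟨s, hs⟩, hd2]
      · intro j _ hj
        rw [if_neg (by omega)]
    · rw [Finset.sum_eq_zero, if_pos ⟨s, hs⟩, hd2,
        Nat.choose_eq_zero_of_lt (by omega), Nat.cast_zero]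
      intro j hj
      rw [if_neg]
      have := Finset.mem_range.mp hj
      omega
  · rw [Finset.sum_eq_zero, if_neg he]
    intro j _
    rw [if_neg]
    intro hc
    exact he ⟨j, by omega⟩

theorem gpoly_symm (n k : ℕ) (hk : k ≤ n) (j : ℕ) (hj : j ≤ n) :
    ((X^2+1 : R[X])^k * X^(n-k)).coeff (n - j)
      = ((X^2+1 : R[X])^k * X^(n-k)).coeff (n + j) := by
  rw [Polynomial.coeff_mul_X_pow', Polynomial.coeff_mul_X_pow']
  rw [if_pos (show n - k ≤ n + j by omega)]
  rw [show n + j - (n - k) = k + j from by omega]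
  by_cases hjk : j ≤ k
  · rw [if_pos (show n - k ≤ n - j by omega)]
    rw [show n - j - (n - k) = k - j from by omega]
    rw [coeff_X_sq_add_one_pow, coeff_X_sq_add_one_pow]
    by_cases he : Even (k + j)
    · obtain ⟨s, hs⟩ := he
      have he2 : Even (k - j) := ⟨s - j, by omega⟩
      have he1 : Even (k + j) := ⟨s, hs⟩
      rw [if_pos he2, if_pos he1]
      rw [show (k - j) / 2 = k - s from by omega, show (k + j) / 2 = s from by omega,
        Nat.choose_symm (show s ≤ k by omega)]
    · have ho2 : ¬ Even (k - j) := by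
        intro h
        obtain ⟨s, hs⟩ := h
        exact he ⟨s + j, by omega⟩
      rw [if_neg ho2, if_neg he]
  · rw [if_neg (show ¬ (n - k ≤ n - j) by omega)]
    rw [coeff_X_sq_add_one_pow]
    by_cases he : Even (k + j)
    · obtain ⟨s, hs⟩ := he
      rw [if_pos ⟨s, hs⟩, show (k + j) / 2 = s from by omega,
        Nat.choose_eq_zero_of_lt (by omega), Nat.cast_zero]
    · rw [if_neg he]

theorem decomp (n : ℕ) (m : ℕ) : m ≤ n → ∀ r : Polynomial R,
    (∀ i, n + m < i → r.coeff i = 0) →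
    (∀ j, j ≤ n → r.coeff (n - j) = r.coeff (n + j)) →
    ∃ c : ℕ → R, c m = r.coeff (n + m) ∧
      r = ∑ k ∈ Finset.range (m + 1), c k • ((X^2+1 : R[X])^k * X^(n-k)) := by
  induction m with
  | zero =>
    intro _ r hhi hsym
    refine ⟨fun _ => r.coeff n, rfl, ?_⟩
    rw [Finset.sum_range_one, pow_zero, one_mul, Nat.sub_zero]
    ext i
    rw [Polynomial.coeff_smul, smul_eq_mul, Polynomial.coeff_X_pow]
    rcases lt_trichotomy i n with h | h | h
    · rw [if_neg (by omega), mul_zero]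
      have h1 := hsym (n - i) (by omega)
      rw [show n - (n - i) = i from by omega] at h1
      rw [h1, hhi (n + (n - i)) (by omega)]
    · rw [h, if_pos rfl, mul_one]
    · rw [if_neg (by omega), mul_zero, hhi i (by omega)]
  | succ m ih =>
    intro hm r hhi hsym
    have hgtop : ((X^2+1 : R[X])^(m+1) * X^(n-(m+1))).coeff (n + (m+1)) = 1 := by
      rw [Polynomial.coeff_mul_X_pow', if_pos (by omega),
        show n + (m+1) - (n - (m+1)) = 2*(m+1) from by omega,
        coeff_X_sq_add_one_pow, if_pos ⟨m+1, by omega⟩,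
        show 2*(m+1)/2 = m+1 from by omega, Nat.choose_self, Nat.cast_one]
    have hghi : ∀ i, n + (m+1) < i → ((X^2+1 : R[X])^(m+1) * X^(n-(m+1))).coeff i = 0 := by
      intro i hi
      rw [Polynomial.coeff_mul_X_pow']
      by_cases hle : n - (m+1) ≤ i
      · rw [if_pos hle, coeff_X_sq_add_one_pow]
        by_cases he : Even (i - (n - (m+1)))
        · obtain ⟨s, hs⟩ := he
          rw [if_pos ⟨s, hs⟩, Nat.choose_eq_zero_of_lt (by omega), Nat.cast_zero]
        · rw [if_neg he]
      · rw [if_neg hle]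
    have hr'hi : ∀ i, n + m < i →
        (r - r.coeff (n + (m+1)) • ((X^2+1 : R[X])^(m+1) * X^(n-(m+1)))).coeff i = 0 := by
      intro i hi
      rw [Polynomial.coeff_sub, Polynomial.coeff_smul, smul_eq_mul]
      by_cases hefin : i = n + (m+1)
      · rw [hefin, hgtop, mul_one, sub_self]
      · rw [hhi i (by omega), hghi i (by omega), mul_zero, sub_zero]
    have hr'sym : ∀ j, j ≤ n →
        (r - r.coeff (n + (m+1)) • ((X^2+1 : R[X])^(m+1) * X^(n-(m+1)))).coeff (n - j)
        = (r - r.coeff (n + (m+1)) • ((X^2+1 : R[X])^(m+1) * X^(n-(m+1)))).coeff (n + j) := by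
      intro j hj
      rw [Polynomial.coeff_sub, Polynomial.coeff_sub, Polynomial.coeff_smul,
        Polynomial.coeff_smul, hsym j hj, gpoly_symm n (m+1) (by omega) j hj]
    obtain ⟨c, hc, hsum⟩ := ih (by omega) _ hr'hi hr'sym
    refine ⟨fun k => if k = m+1 then r.coeff (n + (m+1)) else c k, by simp, ?_⟩
    rw [Finset.sum_range_succ]
    have hcongr : ∀ k ∈ Finset.range (m+1),
        (if k = m+1 then r.coeff (n + (m+1)) else c k) • ((X^2+1:R[X])^k * X^(n-k))
          = c k • ((X^2+1:R[X])^k * X^(n-k)) := by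
      intro k hk
      rw [if_neg (by have := Finset.mem_range.mp hk; omega)]
    rw [Finset.sum_congr rfl hcongr, ← hsum]
    simp

end Kirby17

/-- David Kirby's theorem: every monic reciprocal polynomial of
degree `2n` over a commutative ring `R` is the characteristic polynomial of a
symplectic matrix over `R`. -/
theorem stmt17 {R : Type*} [CommRing R] (n : ℕ) (hn : 1 ≤ n)
    (p : Polynomial R) (hmonic : p.Monic) (hdeg : p.natDegree = 2 * n)
    (hrecip : ∀ i ≤ 2 * n, p.coeff i = p.coeff (2 * n - i)) :
    ∃ M ∈ Matrix.symplecticGroup (Fin n) R, Matrix.charpoly M = p := by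
  classical
  obtain ⟨c, hcn, hp⟩ := Kirby17.decomp n n le_rfl p
    (fun i hi => Polynomial.coeff_eq_zero_of_natDegree_lt (by omega))
    (fun j hj => by
      have h := hrecip (n - j) (by omega)
      rw [show 2 * n - (n - j) = n + j from by omega] at h
      exact h)
  have hcn1 : c n = 1 := by
    rw [hcn, show n + n = 2 * n from by omega, ← hdeg]
    exact hmonic.coeff_natDegree
  set a : ℕ → R := fun k => if k ≤ n then c k else 0 with ha
  have ha1 : a n = 1 := by simp only [ha]; rw [if_pos le_rfl, hcn1]
  have ha0 : ∀ k, n < k → a k = 0 := by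
    intro k hk
    simp only [ha]
    rw [if_neg (by omega)]
  have hn0 : 0 < n := hn
  set H : Matrix (Fin n) (Fin n) R := Kirby17.hank n a with hH
  set Cm : Matrix (Fin n) (Fin n) R := Kirby17.comp n a with hCm
  have hdetH : IsUnit H.det := Kirby17.isUnit_det_hank n a ha1 ha0
  have hHsymm : Hᵀ = H := Kirby17.hank_transpose n a
  have hHinv : H * H⁻¹ = 1 := Matrix.mul_nonsing_inv H hdetH
  have hinvH : H⁻¹ * H = 1 := Matrix.nonsing_inv_mul H hdetH
  have hHinvT : (H⁻¹)ᵀ = H⁻¹ := by rw [Matrix.transpose_nonsing_inv, hHsymm]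
  have hkey : Cm * H = H * Cmᵀ := Kirby17.comp_hank_comm n hn0 a ha1 ha0
  have hkey2 : H⁻¹ * Cm = Cmᵀ * H⁻¹ := by
    calc H⁻¹ * Cm = H⁻¹ * Cm * (H * H⁻¹) := by rw [hHinv, Matrix.mul_one]
      _ = H⁻¹ * (Cm * H) * H⁻¹ := by simp only [Matrix.mul_assoc]
      _ = H⁻¹ * (H * Cmᵀ) * H⁻¹ := by rw [hkey]
      _ = H⁻¹ * H * (Cmᵀ * H⁻¹) := by simp only [Matrix.mul_assoc]
      _ = Cmᵀ * H⁻¹ := by rw [hinvH, Matrix.one_mul]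
  refine ⟨Matrix.fromBlocks Cmᵀ (-H⁻¹) H 0, ?_, ?_⟩
  · rw [SymplecticGroup.mem_iff, Matrix.J, Matrix.fromBlocks_transpose,
      Matrix.fromBlocks_multiply, Matrix.fromBlocks_multiply]
    simp only [Matrix.mul_zero, Matrix.zero_mul, Matrix.mul_one, Matrix.one_mul,
      Matrix.mul_neg, Matrix.neg_mul, add_zero, zero_add, Matrix.transpose_neg,
      hHinvT, hHsymm, Matrix.transpose_transpose, Matrix.transpose_zero, neg_neg]
    rw [Matrix.fromBlocks_inj]
    refine ⟨?_, ?_, ?_, ?_⟩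
    · rw [hkey2]
      exact neg_add_cancel _
    · rw [hinvH]
    · rw [hHinv]
    · rfl
  · -- charpoly computation
    set S : Matrix (Fin n) (Fin n) (Polynomial R) :=
      Matrix.charmatrix (0 : Matrix (Fin n) (Fin n) R) with hS
    have hSdiag : S = Matrix.diagonal (fun _ => (Polynomial.X : Polynomial R)) := by
      rw [hS]
      ext i j
      by_cases h : i = j
      · subst h; simp
      · rw [Matrix.charmatrix_apply_ne _ _ _ h, Matrix.diagonal_apply_ne _ h]
        simp
    have hSdet : S.det = Polynomial.X ^ n := by
      rw [hSdiag, Matrix.det_diagonal]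
      simp
    have hScomm : ∀ A : Matrix (Fin n) (Fin n) (Polynomial R), A * S = S * A := by
      intro A
      rw [hSdiag]
      ext i j
      rw [Matrix.mul_diagonal, Matrix.diagonal_mul, mul_comm]
    set N : Matrix (Fin n ⊕ Fin n) (Fin n ⊕ Fin n) (Polynomial R) :=
      Matrix.fromBlocks S 0 (H.map Polynomial.C) 1 with hN
    have hNdet : N.det = Polynomial.X ^ n := by
      rw [hN, Matrix.det_fromBlocks_zero₁₂, hSdet, Matrix.det_one, mul_one]
    have hmapneg : ((-H⁻¹).map (Polynomial.C : R → Polynomial R))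
        = -((H⁻¹).map Polynomial.C) := by
      ext i j
      simp [Matrix.map_apply]
    have hmap1 : (H⁻¹).map (Polynomial.C : R → Polynomial R) * H.map Polynomial.C = 1 := by
      rw [show ((H⁻¹).map (Polynomial.C : R → Polynomial R) : Matrix (Fin n) (Fin n) (Polynomial R))
          = (H⁻¹).map (Polynomial.C : R →+* Polynomial R) from rfl,
        show (H.map (Polynomial.C : R → Polynomial R) : Matrix (Fin n) (Fin n) (Polynomial R))
          = H.map (Polynomial.C : R →+* Polynomial R) from rfl,
        ← Matrix.map_mul, hinvH]
      exact Matrix.map_one _ (map_zero _) (map_one _)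
    have hprod : Matrix.charmatrix (Matrix.fromBlocks Cmᵀ (-H⁻¹) H 0) * N
        = Matrix.fromBlocks (Matrix.charmatrix Cmᵀ * S + 1) ((H⁻¹).map Polynomial.C) 0 S := by
      rw [Matrix.charmatrix_fromBlocks, ← hS, hN, hmapneg, neg_neg, Matrix.fromBlocks_multiply]
      rw [Matrix.fromBlocks_inj]
      refine ⟨by rw [hmap1], by rw [Matrix.mul_zero, zero_add, Matrix.mul_one], ?_, ?_⟩
      · rw [Matrix.neg_mul, hScomm (H.map Polynomial.C)]
        exact neg_add_cancel _
      · rw [Matrix.mul_zero, zero_add, Matrix.mul_one]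
    have hgd := Kirby17.det_gmat n ((Polynomial.X : Polynomial R)^2+1) Polynomial.X
      (fun k => Polynomial.C (a k))
    have hpeq : ((Polynomial.X : Polynomial R)^2+1)^n + ∑ k ∈ Finset.range n,
        Polynomial.C (a k) * ((Polynomial.X : Polynomial R)^2+1)^k * Polynomial.X^(n-k) = p := by
      rw [hp, Finset.sum_range_succ, hcn1, one_smul,
        show n - n = 0 from by omega, pow_zero, mul_one, add_comm]
      congr 1
      apply Finset.sum_congr rfl
      intro k hk
      have hk' : k ≤ n := by have := Finset.mem_range.mp hk; omega
      rw [Polynomial.smul_eq_C_mul]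
      simp only [ha]
      rw [if_pos hk', mul_assoc]
    have hTL : Matrix.charmatrix Cmᵀ * S + 1
        = (Kirby17.gmat n ((Polynomial.X : Polynomial R)^2+1) Polynomial.X
            (fun k => Polynomial.C (a k)))ᵀ := by
      rw [hSdiag]
      refine Matrix.ext fun i j => ?_
      rw [Matrix.add_apply, Matrix.mul_diagonal, Matrix.transpose_apply,
        Matrix.charmatrix_apply, Matrix.transpose_apply]
      simp only [hCm, Kirby17.comp, Kirby17.gmat, Matrix.of_apply, Matrix.one_apply,
        Matrix.diagonal_apply]
      rw [map_sub, apply_ite Polynomial.C, apply_ite Polynomial.C, _root_.map_one, _root_.map_zero]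
      by_cases h1 : i = j
      · subst h1
        rw [if_pos rfl, if_pos rfl, if_pos rfl,
          if_neg (show ¬((i:ℕ) = (i:ℕ)+1) by omega),
          if_neg (show ¬((i:ℕ) = (i:ℕ)+1) by omega)]
        by_cases h3 : (i:ℕ) = n-1
        · rw [if_pos h3, if_pos h3]; ring
        · rw [if_neg h3, if_neg h3]; ring
      · have h1' : ¬((j:ℕ) = (i:ℕ)) := fun h => h1 (Fin.ext h.symm)
        rw [if_neg h1, if_neg h1, if_neg h1']
        by_cases h2 : (j:ℕ) = (i:ℕ)+1 <;> by_cases h3 : (i:ℕ) = n-1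
        · rw [if_pos h2, if_pos h3, if_pos h2, if_pos h3]; ring
        · rw [if_pos h2, if_neg h3, if_pos h2, if_neg h3]; ring
        · rw [if_neg h2, if_pos h3, if_neg h2, if_pos h3]; ring
        · rw [if_neg h2, if_neg h3, if_neg h2, if_neg h3]; ring
    have hXreg := (Polynomial.monic_X_pow (R := R) n).isRegular.right
    apply hXreg
    show Matrix.charpoly _ * Polynomial.X ^ n = p * Polynomial.X ^ n
    calc Matrix.charpoly (Matrix.fromBlocks Cmᵀ (-H⁻¹) H 0) * Polynomial.X ^ n
        = (Matrix.charmatrix (Matrix.fromBlocks Cmᵀ (-H⁻¹) H 0) * N).det := by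
          rw [Matrix.det_mul, hNdet, Matrix.charpoly]
      _ = (Matrix.charmatrix Cmᵀ * S + 1).det * Polynomial.X ^ n := by
          rw [hprod, Matrix.det_fromBlocks_zero₂₁, hSdet]
      _ = p * Polynomial.X ^ n := by
          rw [hTL, Matrix.det_transpose, hgd]
          rw [hpeq]
end
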